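/- Re-encryption correctness: let K_S = Σᵢ kᵢ·B and let (C₁, C₂) = (r·B, X + r·K_S) be a ciphertext under the collective key. If starting from (0, C₂), each party i ∈ {1,...,t} samples vᵢ and updates the pair to (C₁^{(i−1)} + vᵢ·B, C₂^{(i−1)} − r·Kᵢ + vᵢ·U) where Kᵢ = kᵢ·B, then the final result is (v·B, X + v·U) with v = v₁+⋯+v_t, i.e., a valid encryption of X under public key U. -/

import Mathlib

/-! Each party's update adds the fixed pair `(vᵢ • B, vᵢ • U - r • kᵢ • B)` to the running
ciphertext, so the result is the starting pair plus the sum of these increments; the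
`-r • Kᵢ` terms add up to `-r • K_S` and cancel the mask in `C₂`. -/

theorem List.foldl_add_eq_add_sum_map {α M : Type*} [AddMonoid M] (f : α → M) (l : List α)
    (a : M) : l.foldl (fun p x => p + f x) a = a + (l.map f).sum := by
  induction l generalizing a with
  | nil => simp
  | cons x l ih => simp [ih, add_assoc]

def reencryptionIncrement {G : Type*} [AddCommGroup G] (B U : G) (r : ℤ) (kv : ℤ × ℤ) : G × G :=
  (kv.2 • B, kv.2 • U - r • (kv.1 • B))

/-- Re-encryption correctness: starting from `(0, X + r • K_S)` with
`K_S = (∑ i, k i) • B`, after each party `i` updates the pair to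
`(C₁ + vᵢ • B, C₂ - r • Kᵢ + vᵢ • U)` with `Kᵢ = kᵢ • B`, the final result is
`((∑ i, v i) • B, X + (∑ i, v i) • U)`, a valid encryption of `X` under `U`. -/
theorem reencryption_correct (G : Type*) [AddCommGroup G]
    (B U X : G) (r : ℤ) (t : ℕ) (k v : Fin t → ℤ) :
    (List.ofFn (fun i => (k i, v i))).foldl
      (fun p kv => (p.1 + kv.2 • B, p.2 - r • (kv.1 • B) + kv.2 • U))
      ((0 : G), X + r • ((∑ i, k i) • B))
    = ((∑ i, v i) • B, X + (∑ i, v i) • U) := by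
  have update_eq_add_increment :
      (fun (p : G × G) (kv : ℤ × ℤ) => (p.1 + kv.2 • B, p.2 - r • (kv.1 • B) + kv.2 • U))
        = fun p kv => p + reencryptionIncrement B U r kv := by
    funext p kv
    ext
    · rfl
    · simp only [reencryptionIncrement, Prod.snd_add]
      abel
  rw [update_eq_add_increment, List.foldl_add_eq_add_sum_map, List.map_ofFn, List.sum_ofFn]
  ext <;> simp [reencryptionIncrement, Prod.fst_sum, Prod.snd_sum, Finset.sum_smul,
    Finset.smul_sum, Finset.sum_sub_distrib]
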